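/- For every t ∈ ℝ and every η ∈ S, one has √Q e^{tBᵀ} η = 0, where e^{tBᵀ} denotes the matrix exponential of tBᵀ. -/

import Mathlib

open Matrix MeasureTheory

/-- The square root of a positive semidefinite matrix (as in the older Mathlib). -/
noncomputable def Matrix.PosSemidef.sqrt {n : Type*} [Fintype n] [DecidableEq n]
    {A : Matrix n n ℝ} (hA : A.PosSemidef) : Matrix n n ℝ :=
  hA.1.eigenvectorUnitary.1 * diagonal ((↑) ∘ Real.sqrt ∘ hA.1.eigenvalues) *
    (star hA.1.eigenvectorUnitary : Matrix n n ℝ)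

/-- The canonical Euclidean norm on `ℝⁿ`. -/
noncomputable def enorm {n : ℕ} (v : Fin n → ℝ) : ℝ := Real.sqrt (∑ i, v i ^ 2)

/-- The canonical Euclidean scalar product on `ℝⁿ`. -/
def euclInner {n : ℕ} (u v : Fin n → ℝ) : ℝ := ∑ i, u i * v i

/-- Membership in `S = ⋂_{j=0}^{n-1} Ker(√Q (Bᵀ)^j)`, where `sq` stands for `√Q`. -/
def memS (n : ℕ) (B sq : Matrix (Fin n) (Fin n) ℝ) (η : Fin n → ℝ) : Prop :=
  ∀ j < n, (sq * Bᵀ ^ j).mulVec η = 0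

/-- Membership in `S^⊥`, the Euclidean orthogonal complement of `S`. -/
def memSperp (n : ℕ) (B sq : Matrix (Fin n) (Fin n) ℝ) (ξ₀ : Fin n → ℝ) : Prop :=
  ∀ η : Fin n → ℝ, memS n B sq η → euclInner ξ₀ η = 0

/-- Membership in `V_k^⊥`, where `V_k = ⋂_{j=0}^{k} Ker(√Q (Bᵀ)^j)`. -/
def memVperp (n : ℕ) (B sq : Matrix (Fin n) (Fin n) ℝ) (k : ℕ) (ξ₀ : Fin n → ℝ) : Prop :=
  ∀ η : Fin n → ℝ, (∀ j ≤ k, (sq * Bᵀ ^ j).mulVec η = 0) → euclInner ξ₀ η = 0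

/-- The index `k_{ξ₀} = min {0 ≤ k ≤ r : ξ₀ ∈ V_k^⊥}` of a vector `ξ₀ ∈ S^⊥`. -/
noncomputable def kIndex (n : ℕ) (B sq : Matrix (Fin n) (Fin n) ℝ) (r : ℕ)
    (ξ₀ : Fin n → ℝ) : ℕ :=
  sInf {k | k ≤ r ∧ memVperp n B sq k ξ₀}

/-- `r` is the smallest integer such that `S = ⋂_{j=0}^{r} Ker(√Q (Bᵀ)^j)`. -/
def IsSmallestr (n : ℕ) (B sq : Matrix (Fin n) (Fin n) ℝ) (r : ℕ) : Prop :=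
  IsLeast {k | ∀ η : Fin n → ℝ,
    (∀ j ≤ k, (sq * Bᵀ ^ j).mulVec η = 0) ↔ memS n B sq η} r

/-- The symbol `a_t(ξ) = (1/2) ∫₀¹ |√Q e^{α t Bᵀ} ξ|^{2s} dα`. -/
noncomputable def symb (n : ℕ) (B sq : Matrix (Fin n) (Fin n) ℝ) (s t : ℝ)
    (ξ : Fin n → ℝ) : ℝ :=
  (1 / 2) * ∫ α in (0:ℝ)..1, _root_.enorm ((sq * NormedSpace.exp ((α * t) • Bᵀ)).mulVec ξ) ^ (2 * s)

/-!
By Cayley–Hamilton every power of `Bᵀ` is a linear combination of the powers `(Bᵀ)^j` with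
`j < n`, so `√Q (Bᵀ)^k η = 0` for all `k`. The matrices `A` with `√Q A η = 0` form a closed
subspace, which then contains every partial sum of the exponential series of `t Bᵀ`, hence its sum.
-/

open Polynomial in
theorem Matrix.pow_mem_of_forall_pow_lt_mem {R ι : Type*} [CommRing R] [Nontrivial R] [Fintype ι]
    [DecidableEq ι] (M : Matrix ι ι R) {K : Submodule R (Matrix ι ι R)}
    (h : ∀ j < Fintype.card ι, M ^ j ∈ K) (k : ℕ) : M ^ k ∈ K := by
  rw [pow_eq_aeval_mod_charpoly, aeval_eq_sum_range]
  refine K.sum_mem fun i _ => ?_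
  by_cases hi : (X ^ k %ₘ M.charpoly).coeff i = 0
  · simp [hi]
  · refine K.smul_mem _ (h i ?_)
    have := (le_degree_of_ne_zero hi).trans_lt (degree_modByMonic_lt _ M.charpoly_monic)
    rwa [charpoly_degree_eq_dim, Nat.cast_lt] at this

theorem NormedSpace.exp_mem_of_forall_pow_mem {𝕂 𝔸 : Type*} [Field 𝕂] [CharZero 𝕂] [Ring 𝔸]
    [Algebra 𝕂 𝔸] [TopologicalSpace 𝔸] [IsTopologicalRing 𝔸] {K : Submodule 𝕂 𝔸}
    (hK : IsClosed (K : Set 𝔸)) {x : 𝔸} (h : ∀ k, x ^ k ∈ K) : exp x ∈ K := by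
  rw [exp_eq_tsum 𝕂]
  exact tsum_mem hK fun k => K.smul_mem _ (h k)

theorem Matrix.mul_exp_smul_mulVec_eq_zero {𝕜 ι : Type*} [RCLike 𝕜] [Fintype ι] [DecidableEq ι]
    {S M : Matrix ι ι 𝕜} {η : ι → 𝕜} (h : ∀ j < Fintype.card ι, (S * M ^ j) *ᵥ η = 0) (t : 𝕜) :
    (S * NormedSpace.exp (t • M)) *ᵥ η = 0 := by
  let K : Submodule 𝕜 (Matrix ι ι 𝕜) :=
    LinearMap.ker (LinearMap.applyₗ η ∘ₗ toLin'.toLinearMap ∘ₗ LinearMap.mulLeft 𝕜 S)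
  have mem_K : ∀ A, A ∈ K ↔ (S * A) *ᵥ η = 0 := fun A => by simp [K]
  have hpow : ∀ k, M ^ k ∈ K := M.pow_mem_of_forall_pow_lt_mem fun j hj => (mem_K _).2 (h j hj)
  refine (mem_K _).1 (NormedSpace.exp_mem_of_forall_pow_mem K.closed_of_finiteDimensional fun k => ?_)
  rw [smul_pow]
  exact K.smul_mem _ (hpow k)

theorem statement2_general (n : ℕ) (B Q : Matrix (Fin n) (Fin n) ℝ)
    (hQ : Q.PosSemidef) :
    ∀ t : ℝ, ∀ η : Fin n → ℝ, memS n B hQ.sqrt η →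
      (hQ.sqrt * NormedSpace.exp (t • Bᵀ)).mulVec η = 0 :=
  fun t _ hη => Matrix.mul_exp_smul_mulVec_eq_zero (by rwa [Fintype.card_fin]) t

/-- For every `t ∈ ℝ` and every `η ∈ S`, one has `√Q e^{tBᵀ} η = 0`. -/
theorem statement2 (n : ℕ) (hn : 1 ≤ n) (B Q : Matrix (Fin n) (Fin n) ℝ)
    (hQ : Q.PosSemidef) :
    ∀ t : ℝ, ∀ η : Fin n → ℝ, memS n B hQ.sqrt η →
      (hQ.sqrt * NormedSpace.exp (t • Bᵀ)).mulVec η = 0 :=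
  statement2_general n B Q hQ
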